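/- arXiv:2302.01248 — 6 statements merged into one kernel-verified Lean document; each statement's English description precedes it below -/
import Mathlib

section
/- Let ${\mathcal T}$ be the penalized robust Bellman operator defined on value functions $V \in [0, 1/(1-\gamma)]^{|S|}$ by $({\mathcal T}V)(s) = \max_{a} \big( R(s,a) + \gamma \inf_{P \in \Delta(S)} [\sum_{s'} P(s')V(s') + \lambda D_f(P \| P^*(\cdot|s,a))] \big)$. Then ${\mathcal T}$ is a $\gamma$-contraction with respect to the supremum norm: for all $V_1, V_2$, $\|{\mathcal T}V_1 - {\mathcal T}V_2\|_\infty \le \gamma \|V_1 - V_2\|_\infty$. -/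
open scoped BigOperators

lemma convex_lin_lb (f : ℝ → ℝ) (hf : ConvexOn ℝ Set.univ f) (hf1 : f 1 = 0)
    {t : ℝ} (ht : 0 ≤ t) : -((|f 0| + |f 2|) * (1 + t)) ≤ f t := by
  have h0 : f 0 ≤ |f 0| := le_abs_self _
  have h2 : f 2 ≤ |f 2| := le_abs_self _
  have habs := abs_nonneg (f 0)
  have habs2 := abs_nonneg (f 2)
  rcases le_or_gt 1 t with h1 | h1
  · have ht0 : 0 < t := lt_of_lt_of_le one_pos h1
    have ha : (0:ℝ) ≤ 1 - 1/t := by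
      have : 1/t ≤ 1 := by rw [div_le_one ht0]; exact h1
      linarith
    have hb : (0:ℝ) ≤ 1/t := by positivity
    have hab : (1 - 1/t) + 1/t = 1 := by ring
    have hc := hf.2 (Set.mem_univ (0:ℝ)) (Set.mem_univ t) ha hb hab
    simp only [smul_eq_mul, mul_zero, zero_add] at hc
    have ht1 : (1/t) * t = 1 := by field_simp
    rw [ht1, hf1] at hc
    have hm := mul_le_mul_of_nonneg_left hc (le_of_lt ht0)
    have e : t * ((1 - 1/t) * f 0 + 1/t * f t) = (t-1) * f 0 + f t := by
      field_simp
    rw [mul_zero, e] at hm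
    have h3 : (t-1) * f 0 ≤ (t-1) * |f 0| :=
      mul_le_mul_of_nonneg_left h0 (by linarith)
    nlinarith [mul_nonneg (le_of_lt ht0) habs, mul_nonneg (le_of_lt ht0) habs2]
  · have h2t : (0:ℝ) < 2 - t := by linarith
    have ha : (0:ℝ) ≤ 1/(2-t) := by positivity
    have hb : (0:ℝ) ≤ (1-t)/(2-t) := by apply div_nonneg <;> linarith
    have hab : 1/(2-t) + (1-t)/(2-t) = 1 := by field_simp <;> ring
    have hc := hf.2 (Set.mem_univ t) (Set.mem_univ (2:ℝ)) ha hb hab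
    simp only [smul_eq_mul] at hc
    have hpt : 1/(2-t) * t + (1-t)/(2-t) * 2 = 1 := by field_simp <;> ring
    rw [hpt, hf1] at hc
    have hm := mul_le_mul_of_nonneg_left hc (le_of_lt h2t)
    have e : (2-t) * (1/(2-t) * f t + (1-t)/(2-t) * f 2) = f t + (1-t) * f 2 := by
      field_simp
    rw [mul_zero, e] at hm
    have h3 : (1-t) * f 2 ≤ (1-t) * |f 2| :=
      mul_le_mul_of_nonneg_left h2 (by linarith)
    nlinarith [mul_nonneg ht habs, mul_nonneg ht habs2]

/-- The penalized robust Bellman operator is a `γ`-contraction in sup-norm. -/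
theorem penalized_robust_bellman_contraction
    {S A : Type*} [Fintype S] [Nonempty S] [Fintype A] [Nonempty A]
    (R : S → A → ℝ) (hR : ∀ s a, R s a ∈ Set.Icc (0:ℝ) 1)
    (γ lam : ℝ) (hγ : γ ∈ Set.Ico (0:ℝ) 1) (hlam : 0 ≤ lam)
    (Pstar : S → A → S → ℝ)
    (hP : ∀ s a, (∀ s', 0 ≤ Pstar s a s') ∧ ∑ s', Pstar s a s' = 1)
    (f : ℝ → ℝ) (hf : ConvexOn ℝ Set.univ f) (hf1 : f 1 = 0)
    (T : (S → ℝ) → S → ℝ)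
    (hT : ∀ V s, T V s = ⨆ a, (R s a + γ * sInf {x : ℝ | ∃ P : S → ℝ,
      (∀ s', 0 ≤ P s') ∧ (∑ s', P s' = 1) ∧ (∀ s', Pstar s a s' = 0 → P s' = 0) ∧
      x = ∑ s', P s' * V s' + lam * ∑ s', f (P s' / Pstar s a s') * Pstar s a s'}))
    (V₁ V₂ : S → ℝ)
    (hV₁ : ∀ s, V₁ s ∈ Set.Icc (0:ℝ) (1/(1-γ)))
    (hV₂ : ∀ s, V₂ s ∈ Set.Icc (0:ℝ) (1/(1-γ))) :
    ∀ s, |T V₁ s - T V₂ s| ≤ γ * ⨆ s', |V₁ s' - V₂ s'| := by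
  intro s
  obtain ⟨hγ0, hγ1⟩ := hγ
  set M := ⨆ s', |V₁ s' - V₂ s'| with hM_def
  have hMb : BddAbove (Set.range fun s' => |V₁ s' - V₂ s'|) := Finite.bddAbove_range _
  have hM : ∀ s', |V₁ s' - V₂ s'| ≤ M := fun s' => le_ciSup hMb s'
  set C := |f 0| + |f 2| with hC_def
  have hC0 : 0 ≤ C := by positivity
  -- every element of a feasible set is bounded below
  have hbdd : ∀ (V : S → ℝ), (∀ s', 0 ≤ V s') → ∀ (a : A),
      ∀ x ∈ {x : ℝ | ∃ P : S → ℝ,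
        (∀ s', 0 ≤ P s') ∧ (∑ s', P s' = 1) ∧ (∀ s', Pstar s a s' = 0 → P s' = 0) ∧
        x = ∑ s', P s' * V s' + lam * ∑ s', f (P s' / Pstar s a s') * Pstar s a s'},
      -(lam * (2*C)) ≤ x := by
    rintro V hV a x ⟨P, hP0, hP1, hPac, rfl⟩
    have hsum1 : 0 ≤ ∑ s', P s' * V s' :=
      Finset.sum_nonneg (fun s' _ => mul_nonneg (hP0 s') (hV s'))
    have hdiv : -(2*C) ≤ ∑ s', f (P s' / Pstar s a s') * Pstar s a s' := by
      have hterm : ∀ s' ∈ Finset.univ,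
          -(C * (Pstar s a s' + P s')) ≤ f (P s' / Pstar s a s') * Pstar s a s' := by
        intro s' _
        rcases eq_or_lt_of_le ((hP s a).1 s') with h | h
        · rw [← h, mul_zero, hPac s' h.symm]
          simp
        · have hq : 0 ≤ P s' / Pstar s a s' := div_nonneg (hP0 s') (le_of_lt h)
          have hlb := convex_lin_lb f hf hf1 hq
          have hmul := mul_le_mul_of_nonneg_right hlb (le_of_lt h)
          have e : -(C * (1 + P s' / Pstar s a s')) * Pstar s a s'
              = -(C * (Pstar s a s' + P s')) := by
            field_simp
          rw [e] at hmul
          exact hmul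
      have hsum := Finset.sum_le_sum hterm
      have e2 : ∑ s', -(C * (Pstar s a s' + P s')) = -(2*C) := by
        rw [Finset.sum_neg_distrib]
        simp only [mul_add]
        rw [Finset.sum_add_distrib, ← Finset.mul_sum, ← Finset.mul_sum, (hP s a).2, hP1]
        ring
      rw [e2] at hsum
      exact hsum
    have : lam * (-(2*C)) ≤ lam * ∑ s', f (P s' / Pstar s a s') * Pstar s a s' :=
      mul_le_mul_of_nonneg_left hdiv hlam
    have hl : -(lam * (2*C)) = lam * (-(2*C)) := by ring
    rw [hl]
    linarith
  -- feasible sets are nonempty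
  have hne : ∀ (V : S → ℝ) (a : A), Set.Nonempty {x : ℝ | ∃ P : S → ℝ,
      (∀ s', 0 ≤ P s') ∧ (∑ s', P s' = 1) ∧ (∀ s', Pstar s a s' = 0 → P s' = 0) ∧
      x = ∑ s', P s' * V s' + lam * ∑ s', f (P s' / Pstar s a s') * Pstar s a s'} := by
    intro V a
    exact ⟨_, Pstar s a, (hP s a).1, (hP s a).2, fun s' h => h, rfl⟩
  -- key comparison of infima
  have key : ∀ (W₁ W₂ : S → ℝ), (∀ s', 0 ≤ W₁ s') → (∀ s', 0 ≤ W₂ s') →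
      (∀ s', W₁ s' ≤ W₂ s' + M) → ∀ a : A,
      sInf {x : ℝ | ∃ P : S → ℝ,
        (∀ s', 0 ≤ P s') ∧ (∑ s', P s' = 1) ∧ (∀ s', Pstar s a s' = 0 → P s' = 0) ∧
        x = ∑ s', P s' * W₁ s' + lam * ∑ s', f (P s' / Pstar s a s') * Pstar s a s'}
      ≤ sInf {x : ℝ | ∃ P : S → ℝ,
        (∀ s', 0 ≤ P s') ∧ (∑ s', P s' = 1) ∧ (∀ s', Pstar s a s' = 0 → P s' = 0) ∧
        x = ∑ s', P s' * W₂ s' + lam * ∑ s', f (P s' / Pstar s a s') * Pstar s a s'} + M := by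
    intro W₁ W₂ hW₁ hW₂ hle a
    rw [← sub_le_iff_le_add]
    apply le_csInf (hne W₂ a)
    rintro x ⟨P, hP0, hP1, hPac, rfl⟩
    rw [sub_le_iff_le_add]
    have h1 : sInf {x : ℝ | ∃ P : S → ℝ,
        (∀ s', 0 ≤ P s') ∧ (∑ s', P s' = 1) ∧ (∀ s', Pstar s a s' = 0 → P s' = 0) ∧
        x = ∑ s', P s' * W₁ s' + lam * ∑ s', f (P s' / Pstar s a s') * Pstar s a s'}
        ≤ ∑ s', P s' * W₁ s' + lam * ∑ s', f (P s' / Pstar s a s') * Pstar s a s' :=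
      csInf_le ⟨_, fun y hy => hbdd W₁ hW₁ a y hy⟩ ⟨P, hP0, hP1, hPac, rfl⟩
    have h2 : ∑ s', P s' * W₁ s' ≤ ∑ s', P s' * W₂ s' + M := by
      have h3 : ∑ s', P s' * W₁ s' ≤ ∑ s', (P s' * W₂ s' + P s' * M) :=
        Finset.sum_le_sum (fun s' _ => by nlinarith [hP0 s', hle s'])
      rw [Finset.sum_add_distrib, ← Finset.sum_mul, hP1, one_mul] at h3
      exact h3
    linarith
  -- bounds on values
  have hV₁0 : ∀ s', 0 ≤ V₁ s' := fun s' => (hV₁ s').1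
  have hV₂0 : ∀ s', 0 ≤ V₂ s' := fun s' => (hV₂ s').1
  have h12 : ∀ s', V₁ s' ≤ V₂ s' + M := fun s' => by
    have := hM s'; have := le_abs_self (V₁ s' - V₂ s'); linarith
  have h21 : ∀ s', V₂ s' ≤ V₁ s' + M := fun s' => by
    have := hM s'; have := neg_abs_le (V₁ s' - V₂ s'); linarith
  -- one-sided bound on the sup
  have main : ∀ (W₁ W₂ : S → ℝ), (∀ s', 0 ≤ W₁ s') → (∀ s', 0 ≤ W₂ s') →
      (∀ s', W₁ s' ≤ W₂ s' + M) → T W₁ s - T W₂ s ≤ γ * M := by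
    intro W₁ W₂ hW₁ hW₂ hle
    rw [hT, hT, sub_le_iff_le_add]
    apply ciSup_le
    intro a
    have hk := key W₁ W₂ hW₁ hW₂ hle a
    have hmul := mul_le_mul_of_nonneg_left hk hγ0
    rw [mul_add] at hmul
    have hb2 : BddAbove (Set.range fun a : A => R s a + γ * sInf {x : ℝ | ∃ P : S → ℝ,
        (∀ s', 0 ≤ P s') ∧ (∑ s', P s' = 1) ∧ (∀ s', Pstar s a s' = 0 → P s' = 0) ∧
        x = ∑ s', P s' * W₂ s' + lam * ∑ s', f (P s' / Pstar s a s') * Pstar s a s'}) :=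
      Finite.bddAbove_range _
    have := le_ciSup hb2 a
    linarith
  rw [abs_sub_le_iff]
  exact ⟨main V₁ V₂ hV₁0 hV₂0 h12, main V₂ V₁ hV₂0 hV₁0 h21⟩
end

section
/- Let $P$ be a probability distribution on a finite set $S$, let $V: S \to [0, 1/(1-\gamma)]$, $\lambda > 0$, and $f(s) = (s-1)^2$ (so $f^*(s) = (s/2+1)_+^2 - 1$). Define $g(\tilde\eta) = -\frac{1}{4\lambda}\mathbb{E}_{s \sim P}[(\tilde\eta - V(s))_+^2] - \lambda + \tilde\eta$. Then every maximizer $\tilde\eta^*$ of $g$ over $\mathbb{R}$ satisfies $\tilde\eta^* \in [\lambda, \frac{2}{1-\gamma} + 4\lambda]$. -/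
open scoped BigOperators

/-- For the chi-square divergence dual objective, every maximizer of
`g(η) = -(1/(4λ)) E_P[(η - V(s))₊²] - λ + η` lies in `[λ, 2/(1-γ) + 4λ]`. -/
theorem chi_square_dual_maximizer_range
    {S : Type*} [Fintype S]
    (P : S → ℝ) (hP : (∀ s, 0 ≤ P s) ∧ ∑ s, P s = 1)
    (γ lam : ℝ) (hγ : γ ∈ Set.Ico (0:ℝ) 1) (hlam : 0 < lam)
    (V : S → ℝ) (hV : ∀ s, V s ∈ Set.Icc (0:ℝ) (1/(1-γ)))
    (g : ℝ → ℝ)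
    (hg : ∀ η, g η = -(1/(4*lam)) * ∑ s, P s * (max (η - V s) 0)^2 - lam + η)
    (ηstar : ℝ) (hmax : ∀ η, g η ≤ g ηstar) :
    ηstar ∈ Set.Icc lam (2/(1-γ) + 4*lam) := by
  obtain ⟨hPpos, hPsum⟩ := hP
  obtain ⟨hγ0, hγ1⟩ := hγ
  have h1γ : 0 < 1 - γ := by linarith
  have hinv : 0 < 1/(1-γ) := by positivity
  have h4 : (0:ℝ) < 4*lam := by linarith
  constructor
  · by_contra h
    push_neg at h
    -- ηstar < lam ; show g ηstar < g lam
    have hsum : ∑ s, P s * (max (lam - V s) 0)^2 ≤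
        (∑ s, P s * (max (ηstar - V s) 0)^2) + (lam - ηstar) * (2*lam) := by
      have hpt : ∀ s : S, P s * (max (lam - V s) 0)^2 ≤
          P s * ((max (ηstar - V s) 0)^2 + (lam - ηstar) * (2*lam)) := by
        intro s
        apply mul_le_mul_of_nonneg_left _ (hPpos s)
        set y := max (lam - V s) 0 with hy
        set x := max (ηstar - V s) 0 with hx
        have hy0 : 0 ≤ y := le_max_right _ _
        have hx0 : 0 ≤ x := le_max_right _ _
        have hyl : y ≤ lam := max_le (by linarith [(hV s).1]) (by linarith)
        have hxy : x ≤ y := max_le ((by linarith : ηstar - V s ≤ lam - V s).trans (le_max_left _ _)) hy0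
        have hyx : y ≤ x + (lam - ηstar) := by
          apply max_le
          · have := le_max_left (ηstar - V s) 0
            linarith
          · linarith
        nlinarith [mul_nonneg hx0 hy0]
      calc ∑ s, P s * (max (lam - V s) 0)^2
          ≤ ∑ s, P s * ((max (ηstar - V s) 0)^2 + (lam - ηstar) * (2*lam)) :=
            Finset.sum_le_sum (fun s _ => hpt s)
        _ = (∑ s, P s * (max (ηstar - V s) 0)^2) + (lam - ηstar) * (2*lam) := by
            simp [mul_add, Finset.sum_add_distrib, ← Finset.sum_mul, hPsum]
    have hlt : g ηstar < g lam := by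
      rw [hg, hg]
      have hc : (1/(4*lam)) * (4*lam) = 1 := by field_simp
      have ht : (0:ℝ) < 1/(4*lam) := by positivity
      nlinarith [mul_le_mul_of_nonneg_left hsum ht.le, hc,
        mul_pos ht (sub_pos.mpr h)]
    exact absurd (hmax lam) (not_le.mpr hlt)
  · by_contra h
    push_neg at h
    set M := 2/(1-γ) + 4*lam with hM
    -- M < ηstar ; show g ηstar < g M
    have hsum : (∑ s, P s * (max (M - V s) 0)^2) + (ηstar - M) * (8*lam) ≤
        ∑ s, P s * (max (ηstar - V s) 0)^2 := by
      have hpt : ∀ s : S, P s * ((max (M - V s) 0)^2 + (ηstar - M) * (8*lam)) ≤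
          P s * (max (ηstar - V s) 0)^2 := by
        intro s
        apply mul_le_mul_of_nonneg_left _ (hPpos s)
        have hVs := (hV s).2
        have h2 : (2:ℝ)/(1-γ) = 2 * (1/(1-γ)) := by ring
        have hxpos : 4*lam ≤ M - V s := by rw [hM]; rw [h2] at *; linarith
        have hx : max (M - V s) 0 = M - V s := max_eq_left (by linarith)
        have hy : max (ηstar - V s) 0 = ηstar - V s := max_eq_left (by linarith)
        rw [hx, hy]
        nlinarith
      calc (∑ s, P s * (max (M - V s) 0)^2) + (ηstar - M) * (8*lam)
          = ∑ s, P s * ((max (M - V s) 0)^2 + (ηstar - M) * (8*lam)) := by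
            simp [mul_add, Finset.sum_add_distrib, ← Finset.sum_mul, hPsum]
        _ ≤ ∑ s, P s * (max (ηstar - V s) 0)^2 :=
            Finset.sum_le_sum (fun s _ => hpt s)
    have hlt : g ηstar < g M := by
      rw [hg, hg]
      have hc : (1/(4*lam)) * (4*lam) = 1 := by field_simp
      have ht : (0:ℝ) < 1/(4*lam) := by positivity
      nlinarith [mul_le_mul_of_nonneg_left hsum ht.le, hc,
        mul_pos ht (sub_pos.mpr h)]
    exact absurd (hmax M) (not_le.mpr hlt)
end

section
/- Let $\{N_t(s,a)\}_{t \ge 0}$ be a family of real-valued random processes indexed by a finite set of pairs $(s,a)$, satisfying $N_0 = 0$ and the recursion $N_{t+1}(s,a) = (1-\beta_t)N_t(s,a) + \beta_t Z_t(s,a)$, where $Z_t(s,a)$ is bounded by $C$ almost surely and has conditional mean zero given the past. If the step sizes satisfy $(1-\beta_t)\beta_{t-1} \le \beta_t$, then for all $w \in \mathbb{R}$ and $t \ge 0$, $\mathbb{E}[\exp(w N_{t+1}(s,a))] \le \exp(w^2 \beta_t C^2 / 2)$. -/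
/-
Conditioning on `ℱ t`, convexity of `exp` on `[-C, C]` gives the conditional Hoeffding bound
`E[exp (b Zₜ) | ℱ t] ≤ cosh (b C) ≤ exp (b² C² / 2)`. As `Nₜ` is `ℱ t`-measurable, the recursion
then yields `E[exp (w N (t+1))] ≤ exp (w² βₜ² C² / 2) · E[exp (w (1 - βₜ) Nₜ)]`, and the induction
on `t` closes because `βₜ² + (1 - βₜ)² βₜ₋₁ ≤ βₜ² + (1 - βₜ) βₜ = βₜ` by the step-size condition.
-/

open MeasureTheory Real ProbabilityTheory

-- `exp` lies below its chord over `[-C, C]`; at `C = 0` the junk `/ C` is harmless since `z = 0`.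
theorem exp_mul_le_cosh_add_of_abs_le (b : ℝ) {C z : ℝ} (hz : |z| ≤ C) :
    exp (b * z) ≤ cosh (b * C) + sinh (b * C) / C * z := by
  rcases (abs_nonneg z).trans hz |>.eq_or_lt with rfl | hC
  · simp [abs_nonpos_iff.1 hz]
  obtain ⟨hzl, hzu⟩ := abs_le.1 hz
  set θ := (C + z) / (2 * C)
  have hθ : (2 * θ - 1) * C = z := by simp only [θ]; field_simp; ring
  have hθ0 : 0 ≤ θ := div_nonneg (by linarith) (by positivity)
  have hθ1 : 0 ≤ 1 - θ := by
    rw [sub_nonneg, div_le_one (by positivity)]; linarith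
  calc exp (b * z) = exp (θ • (b * C) + (1 - θ) • -(b * C)) := by
        rw [← hθ, smul_eq_mul, smul_eq_mul]; ring_nf
    _ ≤ θ • exp (b * C) + (1 - θ) • exp (-(b * C)) :=
        convexOn_exp.2 (Set.mem_univ _) (Set.mem_univ _) hθ0 hθ1 (add_sub_cancel θ 1)
    _ = cosh (b * C) + sinh (b * C) / C * z := by
        rw [cosh_eq, sinh_eq, ← hθ, smul_eq_mul, smul_eq_mul]; field_simp; ring

section Conditional

variable {Ω : Type*} {m m0 : MeasurableSpace Ω} {μ : Measure Ω} {f Z : Ω → ℝ}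

theorem integral_mul_eq_zero_of_condExp_eq_zero (hm : m ≤ m0) [SigmaFinite (μ.trim hm)]
    (hf : StronglyMeasurable[m] f) (hfZ : Integrable (fun ω ↦ f ω * Z ω) μ) (hZ : Integrable Z μ)
    (hZmean : μ[Z | m] =ᵐ[μ] 0) : ∫ ω, f ω * Z ω ∂μ = 0 := by
  calc ∫ ω, f ω * Z ω ∂μ = ∫ ω, μ[f * Z | m] ω ∂μ := (integral_condExp hm).symm
    _ = ∫ ω, (0 : ℝ) ∂μ := by
        refine integral_congr_ae ((condExp_mul_of_stronglyMeasurable_left hf hfZ hZ).trans ?_)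
        filter_upwards [hZmean] with ω hω
        simp [hω]
    _ = 0 := integral_zero _ _

-- Hoeffding's lemma on `[-C, C]`, conditionally on `m`, integrated against `f`.
theorem integral_mul_exp_mul_le_of_condExp_eq_zero [IsFiniteMeasure μ] (hm : m ≤ m0) {C : ℝ}
    (hf : StronglyMeasurable[m] f) (hf_int : Integrable f μ) (hf_nonneg : 0 ≤ᵐ[μ] f)
    (hZ : AEStronglyMeasurable Z μ) (hZ_bdd : ∀ᵐ ω ∂μ, |Z ω| ≤ C) (hZmean : μ[Z | m] =ᵐ[μ] 0)
    (b : ℝ) :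
    ∫ ω, f ω * exp (b * Z ω) ∂μ ≤ exp (b ^ 2 * C ^ 2 / 2) * ∫ ω, f ω ∂μ := by
  have hZ_int : Integrable Z μ := Integrable.of_bound hZ C (by simpa using hZ_bdd)
  have hfZ : Integrable (fun ω ↦ f ω * Z ω) μ := hf_int.mul_bdd hZ (by simpa using hZ_bdd)
  have hfexp : Integrable (fun ω ↦ f ω * exp (b * Z ω)) μ := by
    refine hf_int.mul_bdd (continuous_exp.comp_aestronglyMeasurable (hZ.const_mul b))
      (c := exp (|b| * C)) ?_
    filter_upwards [hZ_bdd] with ω hω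
    rw [norm_of_nonneg (exp_pos _).le, exp_le_exp]
    calc b * Z ω ≤ |b| * |Z ω| := by rw [← abs_mul]; exact le_abs_self _
      _ ≤ |b| * C := by gcongr
  set c := sinh (b * C) / C
  calc ∫ ω, f ω * exp (b * Z ω) ∂μ
      ≤ ∫ ω, cosh (b * C) * f ω + c * (f ω * Z ω) ∂μ := by
        refine integral_mono_ae hfexp ((hf_int.const_mul _).add (hfZ.const_mul _)) ?_
        filter_upwards [hf_nonneg, hZ_bdd] with ω hfω hZω
        calc f ω * exp (b * Z ω) ≤ f ω * (cosh (b * C) + c * Z ω) :=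
              mul_le_mul_of_nonneg_left (exp_mul_le_cosh_add_of_abs_le b hZω) hfω
          _ = _ := by ring
    _ = cosh (b * C) * ∫ ω, f ω ∂μ := by
        rw [integral_add (hf_int.const_mul _) (hfZ.const_mul _), integral_const_mul,
          integral_const_mul, integral_mul_eq_zero_of_condExp_eq_zero hm hf hfZ hZ_int hZmean,
          mul_zero, add_zero]
    _ ≤ exp (b ^ 2 * C ^ 2 / 2) * ∫ ω, f ω ∂μ := by
        gcongr
        · exact integral_nonneg_of_ae hf_nonneg
        · simpa [mul_pow] using cosh_le_exp_half_sq (b * C)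

end Conditional

theorem sq_add_one_sub_sq_mul_le {b b' : ℝ} (hb : b ≤ 1) (h : (1 - b) * b' ≤ b) :
    b ^ 2 + (1 - b) ^ 2 * b' ≤ b := by
  nlinarith [mul_le_mul_of_nonneg_left h (sub_nonneg.2 hb)]

section Recursion

variable {Ω : Type*} {m0 : MeasurableSpace Ω} {μ : Measure Ω} {ℱ : Filtration ℕ m0}
  {β : ℕ → ℝ} {C : ℝ} {Z N : ℕ → Ω → ℝ}

theorem stronglyAdapted_of_rec (hZ : ∀ t, StronglyMeasurable[ℱ (t + 1)] (Z t))
    (hN0 : ∀ ω, N 0 ω = 0) (hNrec : ∀ t ω, N (t + 1) ω = (1 - β t) * N t ω + β t * Z t ω) :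
    StronglyAdapted ℱ N := by
  intro t
  induction t with
  | zero => rw [funext hN0]; exact stronglyMeasurable_const
  | succ t ih =>
    rw [funext (hNrec t)]
    exact ((ih.mono (ℱ.mono t.le_succ)).const_mul _).add ((hZ t).const_mul _)

theorem ae_abs_le_of_rec (hC : 0 ≤ C) (hβ0 : ∀ t, 0 ≤ β t) (hβ1 : ∀ t, β t ≤ 1)
    (hZ_bdd : ∀ t, ∀ᵐ ω ∂μ, |Z t ω| ≤ C) (hN0 : ∀ ω, N 0 ω = 0)
    (hNrec : ∀ t ω, N (t + 1) ω = (1 - β t) * N t ω + β t * Z t ω) (t : ℕ) :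
    ∀ᵐ ω ∂μ, |N t ω| ≤ C := by
  induction t with
  | zero => exact ae_of_all _ fun ω ↦ by simpa [hN0] using hC
  | succ t ih =>
    filter_upwards [ih, hZ_bdd t] with ω hN hZ
    rw [hNrec, abs_le] at *
    have := hβ0 t
    have := hβ1 t
    constructor <;> nlinarith

theorem integral_exp_mul_succ_le_of_rec [IsFiniteMeasure μ] (hN : StronglyAdapted ℱ N)
    (hN_bdd : ∀ t, ∀ᵐ ω ∂μ, |N t ω| ≤ C) (hZ : ∀ t, StronglyMeasurable[ℱ (t + 1)] (Z t))
    (hZ_bdd : ∀ t, ∀ᵐ ω ∂μ, |Z t ω| ≤ C) (hZmean : ∀ t, μ[Z t | ℱ t] =ᵐ[μ] 0)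
    (hNrec : ∀ t ω, N (t + 1) ω = (1 - β t) * N t ω + β t * Z t ω) (w : ℝ) (t : ℕ) :
    ∫ ω, exp (w * N (t + 1) ω) ∂μ
      ≤ exp ((w * β t) ^ 2 * C ^ 2 / 2) * ∫ ω, exp (w * (1 - β t) * N t ω) ∂μ := by
  have hsplit : ∀ ω,
      exp (w * N (t + 1) ω) = exp (w * (1 - β t) * N t ω) * exp (w * β t * Z t ω) := fun ω ↦ by rw [hNrec, ← exp_add]; ring_nf
  simp_rw [hsplit]
  refine integral_mul_exp_mul_le_of_condExp_eq_zero (ℱ.le t)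
    (continuous_exp.comp_stronglyMeasurable ((hN t).const_mul _)) ?_
    (ae_of_all _ fun _ ↦ (exp_pos _).le) ((hZ t).mono (ℱ.le _)).aestronglyMeasurable
    (hZ_bdd t) (hZmean t) _
  exact integrable_exp_mul_of_mem_Icc ((hN t).mono (ℱ.le t)).measurable.aemeasurable
    ((hN_bdd t).mono fun _ ↦ abs_le.1)

end Recursion

theorem mgf_bound_noise_recursion_general
    {Ω : Type*} {m0 : MeasurableSpace Ω} (μ : Measure Ω) [IsProbabilityMeasure μ]
    (ℱ : Filtration ℕ m0) {ι : Type*}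
    (β : ℕ → ℝ) (C : ℝ) (hC : 0 ≤ C)
    (Z N : ℕ → ι → Ω → ℝ)
    (hβ : ∀ t, β t ∈ Set.Ioc (0:ℝ) 1)
    (hstep : ∀ t, (1 - β (t+1)) * β t ≤ β (t+1))
    (hZmeas : ∀ t i, StronglyMeasurable[ℱ (t+1)] (Z t i))
    (hZbdd : ∀ t i, ∀ᵐ ω ∂μ, |Z t i ω| ≤ C)
    (hZmean : ∀ t i, μ[Z t i | ℱ t] =ᵐ[μ] 0)
    (hN0 : ∀ i ω, N 0 i ω = 0)
    (hNrec : ∀ t i ω, N (t+1) i ω = (1 - β t) * N t i ω + β t * Z t i ω) :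
    ∀ (w : ℝ) (t : ℕ) (i : ι),
      ∫ ω, Real.exp (w * N (t+1) i ω) ∂μ ≤ Real.exp (w ^ 2 * β t * C ^ 2 / 2) := by
  intro w t i
  have hβ0 t : 0 ≤ β t := (hβ t).1.le
  have hβ1 t : β t ≤ 1 := (hβ t).2
  have hN := stronglyAdapted_of_rec (N := (N · i)) (hZmeas · i) (hN0 i) (hNrec · i)
  have hN_bdd := ae_abs_le_of_rec (μ := μ) (N := (N · i)) hC hβ0 hβ1 (hZbdd · i) (hN0 i)
    (hNrec · i)
  have hone_step := integral_exp_mul_succ_le_of_rec hN hN_bdd (hZmeas · i) (hZbdd · i)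
    (hZmean · i) (hNrec · i)
  induction t generalizing w with
  | zero =>
    calc ∫ ω, exp (w * N 1 i ω) ∂μ
        ≤ exp ((w * β 0) ^ 2 * C ^ 2 / 2) * ∫ ω, exp (w * (1 - β 0) * N 0 i ω) ∂μ :=
          hone_step w 0
      _ = exp ((w * β 0) ^ 2 * C ^ 2 / 2) := by simp [hN0]
      _ ≤ exp (w ^ 2 * β 0 * C ^ 2 / 2) := by
          have := pow_le_of_le_one (hβ0 0) (hβ1 0) two_ne_zero
          exact exp_le_exp.2 (by linear_combination (w ^ 2 * C ^ 2 / 2) * this)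
  | succ t ih =>
    calc ∫ ω, exp (w * N (t + 2) i ω) ∂μ
        ≤ exp ((w * β (t + 1)) ^ 2 * C ^ 2 / 2)
            * ∫ ω, exp (w * (1 - β (t + 1)) * N (t + 1) i ω) ∂μ := hone_step w (t + 1)
      _ ≤ exp ((w * β (t + 1)) ^ 2 * C ^ 2 / 2)
            * exp ((w * (1 - β (t + 1))) ^ 2 * β t * C ^ 2 / 2) := by gcongr; exact ih _
      _ ≤ exp (w ^ 2 * β (t + 1) * C ^ 2 / 2) := by
          have := sq_add_one_sub_sq_mul_le (hβ1 (t + 1)) (hstep t)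
          rw [← exp_add]
          exact exp_le_exp.2 (by linear_combination (w ^ 2 * C ^ 2 / 2) * this)

/-- MGF bound for the noise-accumulation recursion
`N_{t+1} = (1-βₜ)Nₜ + βₜ Zₜ` with bounded, conditionally mean-zero noise:
`E[exp(w N_{t+1}(s,a))] ≤ exp(w² βₜ C² / 2)` when `(1-βₜ)β_{t-1} ≤ βₜ`. -/
theorem mgf_bound_noise_recursion
    {Ω : Type*} {m0 : MeasurableSpace Ω} (μ : Measure Ω) [IsProbabilityMeasure μ]
    (ℱ : Filtration ℕ m0) {ι : Type*} [Fintype ι]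
    (β : ℕ → ℝ) (C : ℝ) (hC : 0 ≤ C)
    (Z N : ℕ → ι → Ω → ℝ)
    (hβ : ∀ t, β t ∈ Set.Ioc (0:ℝ) 1)
    (hstep : ∀ t, (1 - β (t+1)) * β t ≤ β (t+1))
    (hZmeas : ∀ t i, StronglyMeasurable[ℱ (t+1)] (Z t i))
    (hZbdd : ∀ t i, ∀ᵐ ω ∂μ, |Z t i ω| ≤ C)
    (hZmean : ∀ t i, μ[Z t i | ℱ t] =ᵐ[μ] 0)
    (hN0 : ∀ i ω, N 0 i ω = 0)
    (hNrec : ∀ t i ω, N (t+1) i ω = (1 - β t) * N t i ω + β t * Z t i ω) :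
    ∀ (w : ℝ) (t : ℕ) (i : ι),
      ∫ ω, Real.exp (w * N (t+1) i ω) ∂μ ≤ Real.exp (w ^ 2 * β t * C ^ 2 / 2) :=
  mgf_bound_noise_recursion_general μ ℱ β C hC Z N hβ hstep hZmeas hZbdd hZmean hN0 hNrec
end

section
/- For $f(t) = (t-1)^2$ (chi-square divergence) with dual objective $J^{(s,a)}(\eta; V) = -\frac{1}{4\lambda}\mathbb{E}_{s' \sim P^*(\cdot|s,a)}[(\eta + 2\lambda - V(s'))_+^2] + \lambda + \eta$ for $V \in [0, (1-\gamma)^{-1}]^{|S|}$: at the maximizer $\eta^*_V(s,a)$, the (sub)second derivative satisfies $\nabla^2 J^{(s,a)}(\eta^*_V(s,a); V) \le -\frac{1}{2(\lambda + \eta^*_V(s,a))} \le -\frac{1}{6(\lambda + (1-\gamma)^{-1})}$; consequently $J^{(s,a)}$ satisfies the one-point strong concavity condition $\nabla J^{(s,a)}(\eta; V)\,(\eta - \eta^*_V(s,a)) \le -\kappa (\eta - \eta^*_V(s,a))^2$ with $\kappa^{-1} = 6(\lambda + (1-\gamma)^{-1})$. -/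
open scoped BigOperators

/-- One-point strong concavity of the chi-square dual objective: with
`J'(η) = 1 - E[(η + 2λ - V(s'))₊]/(2λ)` and maximizer `η*` (first-order condition
`E[(η* + 2λ - V(s'))₊] = 2λ`, `η* ∈ [-λ, 2(1-γ)⁻¹ + 2λ]`),
`J'(η)(η - η*) ≤ -κ (η - η*)²` with `κ = (6(λ + (1-γ)⁻¹))⁻¹`. -/
theorem chi_square_one_point_strong_concavity
    {S : Type*} [Fintype S] [Nonempty S]
    (P : S → ℝ) (hP : (∀ s, 0 ≤ P s) ∧ ∑ s, P s = 1)
    (γ lam : ℝ) (hγ : γ ∈ Set.Ico (0:ℝ) 1) (hlam : 0 < lam)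
    (V : S → ℝ) (hV : ∀ s, V s ∈ Set.Icc (0:ℝ) (1/(1-γ)))
    (J' : ℝ → ℝ)
    (hJ' : ∀ η, J' η = 1 - (∑ s, P s * max (η + 2*lam - V s) 0) / (2*lam))
    (ηstar : ℝ)
    (hfoc : ∑ s, P s * max (ηstar + 2*lam - V s) 0 = 2*lam)
    (hrange : ηstar ∈ Set.Icc (-lam) (2/(1-γ) + 2*lam)) :
    ∀ η ∈ Set.Icc (-(2*lam)) (2/(1-γ) + 2*lam),
      J' η * (η - ηstar) ≤ -(6 * (lam + 1/(1-γ)))⁻¹ * (η - ηstar) ^ 2 := by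
  obtain ⟨hP0, hP1⟩ := hP
  obtain ⟨hγ0, hγ1⟩ := hγ
  have h1γ : 0 < 1 - γ := by linarith
  have hinv : 0 < 1/(1-γ) := by positivity
  obtain ⟨hsl, hsr⟩ := hrange
  intro η hη
  obtain ⟨hηl, hηr⟩ := hη
  set M : ℝ := ηstar + 2*lam with hMdef
  have hM : 0 < M := by simp only [hMdef]; linarith
  set d : ℝ := η - ηstar with hd
  have hdM : -M ≤ d := by simp only [hMdef, hd]; linarith
  -- per-state inequality
  have key : ∀ s : S,
      max (ηstar + 2*lam - V s) 0 * d^2 ≤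
        M * ((max (η + 2*lam - V s) 0 - max (ηstar + 2*lam - V s) 0) * d) := by
    intro s
    obtain ⟨hV0, hV1⟩ := hV s
    have haM : ηstar + 2*lam - V s ≤ M := by simp only [hMdef]; linarith
    have hb : η + 2*lam - V s = (ηstar + 2*lam - V s) + d := by simp only [hd]; ring
    rw [hb]
    set a : ℝ := ηstar + 2*lam - V s with ha
    rcases le_or_gt a 0 with h | h
    · rw [max_eq_right h]
      rcases le_or_gt (a + d) 0 with h2 | h2
      · rw [max_eq_right h2]; nlinarith
      · rw [max_eq_left h2.le]
        rcases le_or_gt 0 d with h3 | h3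
        · nlinarith [mul_nonneg (mul_nonneg hM.le h2.le) h3]
        · nlinarith
    · rw [max_eq_left h.le]
      rcases le_or_gt (a + d) 0 with h2 | h2
      · rw [max_eq_right h2]
        have hnd : 0 ≤ -d := by linarith
        have hMd : 0 ≤ M + d := by linarith
        nlinarith [mul_nonneg (mul_nonneg h.le hnd) hMd]
      · rw [max_eq_left h2.le]
        nlinarith
  -- sum it up
  have h1 : ∑ s, P s * (max (ηstar + 2*lam - V s) 0 * d^2) ≤
      ∑ s, P s * (M * ((max (η + 2*lam - V s) 0 - max (ηstar + 2*lam - V s) 0) * d)) :=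
    Finset.sum_le_sum fun s _ => mul_le_mul_of_nonneg_left (key s) (hP0 s)
  have h2 : ∑ s, P s * (max (ηstar + 2*lam - V s) 0 * d^2)
      = (∑ s, P s * max (ηstar + 2*lam - V s) 0) * d^2 := by
    rw [Finset.sum_mul]; exact Finset.sum_congr rfl fun s _ => by ring
  have h3 : ∑ s, P s * (M * ((max (η + 2*lam - V s) 0 - max (ηstar + 2*lam - V s) 0) * d))
      = M * ((∑ s, (P s * max (η + 2*lam - V s) 0 - P s * max (ηstar + 2*lam - V s) 0)) * d) := by
    rw [Finset.sum_mul, Finset.mul_sum]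
    exact Finset.sum_congr rfl fun s _ => by ring
  have h4 : ∑ s, (P s * max (η + 2*lam - V s) 0 - P s * max (ηstar + 2*lam - V s) 0)
      = (∑ s, P s * max (η + 2*lam - V s) 0) - 2*lam := by
    rw [Finset.sum_sub_distrib, hfoc]
  rw [hfoc] at h2
  rw [h4] at h3
  set G : ℝ := ∑ s, P s * max (η + 2*lam - V s) 0 with hG
  have hsum : (2*lam) * d^2 ≤ M * ((G - 2*lam) * d) := by
    rw [← h2, ← h3] ; exact h1
  -- finish
  have h2lam : (0:ℝ) < 2*lam := by linarith
  have hgd : (2*lam) * d^2 / M ≤ (G - 2*lam) * d := by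
    rw [div_le_iff₀ hM]; linarith
  have e1 : J' η * d = -((G - 2*lam) * d) / (2*lam) := by
    rw [hJ' η, ← hG]
    field_simp
    ring
  rw [e1]
  set X : ℝ := 6 * (lam + 1/(1-γ)) with hX
  have hXpos : 0 < X := by simp only [hX]; positivity
  have hMle : M ≤ X := by
    have h2e : 2/(1-γ) = 2 * (1/(1-γ)) := by ring
    rw [h2e] at hsr
    simp only [hMdef, hX]
    linarith
  have hκM : M * X⁻¹ ≤ 1 := by
    have h1 : M * X⁻¹ ≤ X * X⁻¹ := by
      apply mul_le_mul_of_nonneg_right hMle (inv_nonneg.mpr hXpos.le)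
    rwa [mul_inv_cancel₀ hXpos.ne'] at h1
  have t1 : M * (-((G - 2*lam) * d)) ≤ -(2*lam*d^2) := by 
    have hB : M * (-((G - 2*lam) * d)) = -(M * ((G - 2*lam) * d)) := by ring
    rw [hB]; linarith
  have t2 : -(2*lam*d^2) ≤ M * (-X⁻¹ * d ^ 2 * (2*lam)) := by
    have hA : 0 ≤ (1 - M*X⁻¹) * (2*lam*d^2) :=
      mul_nonneg (by linarith) (mul_nonneg h2lam.le (sq_nonneg d))
    have hB : M * (-X⁻¹ * d ^ 2 * (2*lam)) = -(2*lam*d^2) + (1 - M*X⁻¹) * (2*lam*d^2) := by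
      ring
    rw [hB]
    linarith
  have final : -((G - 2*lam) * d) ≤ -X⁻¹ * d ^ 2 * (2*lam) :=
    le_of_mul_le_mul_left (t1.trans t2) hM
  rw [div_le_iff₀ h2lam]
  linarith [final]
end

section
/- Let $f$ be a convex function with differentiable, strictly convex conjugate $f^*$, $\lambda > 0$, and for $V \in [0,(1-\gamma)^{-1}]^{|S|}$ let $\eta^*_V$ be the solution of the first-order condition $\mathbb{E}_{s' \sim P^*}[\nabla f^*((\eta^*_V - V(s'))/\lambda)] = 1$ (assumed to exist uniquely and depend differentiably on $V$). Then $\eta^*_V$ is 1-Lipschitz in $V$ with respect to the supremum norm: for any $V_1, V_2$, $|\eta^*_{V_1} - \eta^*_{V_2}| \le \|V_1 - V_2\|_\infty$. -/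
open scoped BigOperators

private lemma dual_opt_aux
    {S : Type*} [Fintype S] [Nonempty S]
    (P : S → ℝ) (hP : (∀ s, 0 ≤ P s) ∧ ∑ s, P s = 1)
    (lam : ℝ) (hlam : 0 < lam)
    (φ : ℝ → ℝ) (hφ : StrictMono φ)
    (V₁ V₂ : S → ℝ) (η₁ η₂ : ℝ)
    (hfoc₁ : ∑ s, P s * φ ((η₁ - V₁ s) / lam) = 1)
    (hfoc₂ : ∑ s, P s * φ ((η₂ - V₂ s) / lam) = 1) :
    η₁ - η₂ ≤ ⨆ s, |V₁ s - V₂ s| := by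
  by_contra h
  push_neg at h
  have hbdd : BddAbove (Set.range fun s => |V₁ s - V₂ s|) :=
    (Set.finite_range _).bddAbove
  have hlt : ∀ s, (η₂ - V₂ s) / lam < (η₁ - V₁ s) / lam := by
    intro s
    apply div_lt_div_of_pos_right _ hlam
    have h1 : V₁ s - V₂ s ≤ |V₁ s - V₂ s| := le_abs_self _
    have h2 : |V₁ s - V₂ s| ≤ ⨆ s, |V₁ s - V₂ s| := le_ciSup hbdd s
    linarith
  have hle : ∀ s ∈ Finset.univ, P s * φ ((η₂ - V₂ s) / lam) ≤ P s * φ ((η₁ - V₁ s) / lam) :=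
    fun s _ => mul_le_mul_of_nonneg_left (hφ (hlt s)).le (hP.1 s)
  obtain ⟨s₀, hs₀⟩ : ∃ s, 0 < P s := by
    by_contra hc
    push_neg at hc
    have : ∑ s, P s = 0 := Finset.sum_eq_zero fun s _ => le_antisymm (hc s) (hP.1 s)
    rw [hP.2] at this; norm_num at this
  have hstrict : ∑ s, P s * φ ((η₂ - V₂ s) / lam) < ∑ s, P s * φ ((η₁ - V₁ s) / lam) := by
    apply Finset.sum_lt_sum hle
    exact ⟨s₀, Finset.mem_univ s₀, mul_lt_mul_of_pos_left (hφ (hlt s₀)) hs₀⟩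
  rw [hfoc₁, hfoc₂] at hstrict
  exact lt_irrefl _ hstrict

/-- Lipschitz dependence of the dual optimum on the value function: if `φ = ∇f*` is
strictly monotone (from strict convexity of `f*`) and `η₁, η₂` solve the first-order
conditions for `V₁, V₂`, then `|η₁ - η₂| ≤ ‖V₁ - V₂‖_∞`. -/
theorem dual_optimum_lipschitz_in_value
    {S : Type*} [Fintype S] [Nonempty S]
    (P : S → ℝ) (hP : (∀ s, 0 ≤ P s) ∧ ∑ s, P s = 1)
    (γ lam : ℝ) (hγ : γ ∈ Set.Ico (0:ℝ) 1) (hlam : 0 < lam)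
    (φ : ℝ → ℝ) (hφ : StrictMono φ)
    (V₁ V₂ : S → ℝ)
    (hV₁ : ∀ s, V₁ s ∈ Set.Icc (0:ℝ) (1/(1-γ)))
    (hV₂ : ∀ s, V₂ s ∈ Set.Icc (0:ℝ) (1/(1-γ)))
    (η₁ η₂ : ℝ)
    (hfoc₁ : ∑ s, P s * φ ((η₁ - V₁ s) / lam) = 1)
    (hfoc₂ : ∑ s, P s * φ ((η₂ - V₂ s) / lam) = 1) :
    |η₁ - η₂| ≤ ⨆ s, |V₁ s - V₂ s| := by
  rw [abs_sub_le_iff]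
  constructor
  · exact dual_opt_aux P hP lam hlam φ hφ V₁ V₂ η₁ η₂ hfoc₁ hfoc₂
  · have := dual_opt_aux P hP lam hlam φ hφ V₂ V₁ η₂ η₁ hfoc₂ hfoc₁
    simpa [abs_sub_comm] using this
end

section
/- In the same 2-state MDP, if instead $p - \frac{V(s_0) p (1-p)}{2\lambda} \ge 0$, then the fixed point satisfies $V(s_0) = 1 + \frac{\gamma V(s_0)}{2}\big(2p - \frac{V(s_0) p (1-p)}{2\lambda}\big)$, and solving the quadratic gives $V(s_0) = \frac{2}{(1-\gamma p) + \sqrt{(1-\gamma p)^2 + \frac{\gamma p (1-p)}{\lambda}}}$. -/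
private lemma solve_quad (A b v : ℝ) (hA : 0 ≤ A) (hb : 0 < b) (hv : 0 < v)
    (hq : A * v ^ 2 + b * v - 1 = 0) :
    v = 2 / (b + Real.sqrt (b ^ 2 + 4 * A)) := by
  have hin : 0 ≤ b ^ 2 + 4 * A := by nlinarith [sq_nonneg b]
  have hs0 : 0 ≤ Real.sqrt (b ^ 2 + 4 * A) := Real.sqrt_nonneg _
  have hs2 : (Real.sqrt (b ^ 2 + 4 * A)) ^ 2 = b ^ 2 + 4 * A := Real.sq_sqrt hin
  set s := Real.sqrt (b ^ 2 + 4 * A) with hs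
  have h2bv : b * v ≤ 1 := by nlinarith
  have hsq : (s * v) ^ 2 = (2 - b * v) ^ 2 := by linear_combination v ^ 2 * hs2 + 4 * hq
  have hpos : 0 < s * v + (2 - b * v) := by nlinarith [mul_nonneg hs0 hv.le]
  have hsv : s * v = 2 - b * v := by nlinarith [hsq, hpos]
  have hbs : 0 < b + s := by linarith
  rw [eq_div_iff (ne_of_gt hbs)]
  linear_combination hsv

/-- In the 2-state, 1-action chi-square penalized robust MDP, if the unconstrained
minimizer of the inner quadratic is feasible, i.e. `p - v p(1-p)/(2λ) ≥ 0`, then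
`v = 1 + (γv/2)(2p - v p(1-p)/(2λ))` and
`v = 2/((1-γp) + √((1-γp)² + γp(1-p)/λ))`. -/
theorem two_state_robust_mdp_interior_case
    (p γ lam v : ℝ) (hp : p ∈ Set.Ioo (0:ℝ) 1) (hγ : γ ∈ Set.Ico (0:ℝ) 1)
    (hlam : 0 < lam) (hv : 0 < v)
    (hfix : v = 1 + γ * sInf {x : ℝ | ∃ q ∈ Set.Icc (0:ℝ) 1,
      x = q * v + lam * ((q - p) ^ 2 / (p * (1 - p)))})
    (hcase : 0 ≤ p - v * p * (1 - p) / (2 * lam)) :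
    v = 1 + γ * v / 2 * (2 * p - v * p * (1 - p) / (2 * lam)) ∧
      v = 2 / ((1 - γ * p) + Real.sqrt ((1 - γ * p) ^ 2 + γ * p * (1 - p) / lam)) := by
  obtain ⟨hp0, hp1⟩ := hp
  obtain ⟨hγ0, hγ1⟩ := hγ
  have hpp : 0 < p * (1 - p) := by nlinarith
  set qs : ℝ := p - v * p * (1 - p) / (2 * lam) with hqs
  have hqs0 : 0 ≤ qs := hcase
  have hqs1 : qs ≤ 1 := by
    have h1 : 0 ≤ v * p * (1 - p) / (2 * lam) :=
      div_nonneg (by nlinarith) (by linarith)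
    simp only [hqs]; linarith
  have hlam' : (lam : ℝ) ≠ 0 := ne_of_gt hlam
  have hpp' : (p * (1 - p) : ℝ) ≠ 0 := ne_of_gt hpp
  have keyq : ∀ q : ℝ, qs * v + lam * ((qs - p) ^ 2 / (p * (1 - p)))
      ≤ q * v + lam * ((q - p) ^ 2 / (p * (1 - p))) := by
    intro q
    have key : q * v + lam * ((q - p) ^ 2 / (p * (1 - p)))
        - (qs * v + lam * ((qs - p) ^ 2 / (p * (1 - p))))
        = lam / (p * (1 - p)) * (q - qs) ^ 2 := by
      simp only [hqs]
      field_simp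
      ring
    nlinarith [mul_nonneg (le_of_lt (div_pos hlam hpp)) (sq_nonneg (q - qs))]
  have hmin : sInf {x : ℝ | ∃ q ∈ Set.Icc (0:ℝ) 1,
      x = q * v + lam * ((q - p) ^ 2 / (p * (1 - p)))}
      = qs * v + lam * ((qs - p) ^ 2 / (p * (1 - p))) := by
    apply le_antisymm
    · exact csInf_le ⟨_, by rintro x ⟨q, hq, rfl⟩; exact keyq q⟩
        ⟨qs, ⟨hqs0, hqs1⟩, rfl⟩
    · exact le_csInf ⟨_, qs, ⟨hqs0, hqs1⟩, rfl⟩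
        (by rintro x ⟨q, hq, rfl⟩; exact keyq q)
  rw [hmin] at hfix
  have e1 : qs * v + lam * ((qs - p) ^ 2 / (p * (1 - p)))
      = v / 2 * (2 * p - v * p * (1 - p) / (2 * lam)) := by
    simp only [hqs]
    field_simp
    ring
  rw [e1] at hfix
  have part1 : v = 1 + γ * v / 2 * (2 * p - v * p * (1 - p) / (2 * lam)) := by
    linear_combination hfix
  refine ⟨part1, ?_⟩
  have hquad : (γ * p * (1 - p) / (4 * lam)) * v ^ 2 + (1 - γ * p) * v - 1 = 0 := by
    linear_combination part1
  have hb0 : 0 < 1 - γ * p := by nlinarith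
  have hA0 : 0 ≤ γ * p * (1 - p) / (4 * lam) :=
    div_nonneg (by nlinarith) (by linarith)
  have h := solve_quad (γ * p * (1 - p) / (4 * lam)) (1 - γ * p) v hA0 hb0 hv hquad
  have harg : (1 - γ * p) ^ 2 + 4 * (γ * p * (1 - p) / (4 * lam))
      = (1 - γ * p) ^ 2 + γ * p * (1 - p) / lam := by
    field_simp
  rw [harg] at h
  exact h
end
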